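/- Let f : ℝ → ℝ be continuously differentiable with f′(t) ≠ 0 for all t ∈ ℝ. Then (θ, ψ) = (0, 0) is the unique zero of the Dirac-GAN gradient vector field v(θ, ψ) = (−f′(θψ)ψ, f′(θψ)θ), and the Jacobian matrix of v at (0, 0) equals [[0, −f′(0)], [f′(0), 0]], whose (complex) eigenvalues are the two purely imaginary numbers ±f′(0)·i. -/

import Mathlib

open Matrix

open Asymptotics Filter Topology Polynomial

/-!
Writing `J = !![0, -1; 1, 0]` for the quarter turn, the Dirac-GAN field is
`v x = f′(x₀ x₁) • J x`. Since `f′` never vanishes and `J` is invertible, `v` vanishes only at `0`.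
At `0` the scalar factor is merely continuous, but `J x = O(‖x‖)`, so `(f′(x₀ x₁) - f′(0)) • J x`
is `o(‖x‖)` and the derivative is `f′(0) • J`. Finally `J` has trace `0` and determinant `1`, so the
characteristic polynomial of `a • J` is `X² + a²`, with roots `±a i`.
-/

section SmulLinear

variable {𝕜 E F : Type*} [NontriviallyNormedField 𝕜] [NormedAddCommGroup E] [NormedSpace 𝕜 E]
  [NormedAddCommGroup F] [NormedSpace 𝕜 F]

theorem hasFDerivAt_smul_clm_of_continuousAt {φ : E → 𝕜} (hφ : ContinuousAt φ 0)
    (L : E →L[𝕜] F) : HasFDerivAt (fun x => φ x • L x) (φ 0 • L) 0 := by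
  rw [hasFDerivAt_iff_isLittleO_nhds_zero]
  have hφ₀ : (fun x => φ x - φ 0) =o[𝓝 0] (fun _ => (1 : 𝕜)) :=
    (isLittleO_one_iff 𝕜).2 (by simpa using hφ.tendsto.sub_const (φ 0))
  simpa [sub_smul] using hφ₀.smul_isBigO (L.isBigO_id (𝓝 0))

end SmulLinear

namespace Matrix

def quarterTurn (R : Type*) [Ring R] : Matrix (Fin 2) (Fin 2) R := !![0, -1; 1, 0]

section CommRing

variable {R : Type*} [CommRing R]

theorem smul_quarterTurn (c : R) : c • quarterTurn R = !![0, -c; c, 0] := by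
  ext i j; fin_cases i <;> fin_cases j <;> simp [quarterTurn]

theorem smul_quarterTurn_mulVec (c : R) (x : Fin 2 → R) :
    c • (quarterTurn R *ᵥ x) = ![-c * x 1, c * x 0] := by
  ext i; fin_cases i <;> simp [quarterTurn, dotProduct, Fin.sum_univ_two]

theorem det_quarterTurn : (quarterTurn R).det = 1 := by
  simp [quarterTurn, det_fin_two]

theorem trace_quarterTurn : (quarterTurn R).trace = 0 := by
  simp [quarterTurn, trace_fin_two]

theorem quarterTurn_mulVec_eq_zero_iff [NoZeroDivisors R] [Nontrivial R] {x : Fin 2 → R} :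
    quarterTurn R *ᵥ x = 0 ↔ x = 0 :=
  ⟨eq_zero_of_mulVec_eq_zero (by simp [det_quarterTurn]), fun h => by rw [h, mulVec_zero]⟩

end CommRing

theorem mem_spectrum_smul_quarterTurn_iff {K : Type*} [Field K] (a μ : K) :
    μ ∈ spectrum K (a • quarterTurn K) ↔ μ ^ 2 + a ^ 2 = 0 := by
  rw [mem_spectrum_iff_isRoot_charpoly, charpoly_fin_two, IsRoot.def]
  simp [trace_smul, trace_quarterTurn, det_quarterTurn]

theorem spectrum_smul_quarterTurn_complex (a : ℂ) :
    spectrum ℂ (a • quarterTurn ℂ) = {a * Complex.I, -(a * Complex.I)} := by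
  ext μ
  have h : μ ^ 2 + a ^ 2 = μ ^ 2 - (a * Complex.I) ^ 2 := by
    rw [mul_pow, Complex.I_sq]; ring
  rw [mem_spectrum_smul_quarterTurn_iff, h, sub_eq_zero, sq_eq_sq_iff_eq_or_eq_neg]
  rfl

theorem map_ofReal_smul_quarterTurn (a : ℝ) :
    (a • quarterTurn ℝ).map Complex.ofReal = (a : ℂ) • quarterTurn ℂ := by
  ext i j; fin_cases i <;> fin_cases j <;> simp [quarterTurn]

end Matrix

theorem dirac_gan_unique_equilibrium_and_eigenvalues
    (f : ℝ → ℝ) (hf : ContDiff ℝ 1 f) (hf' : ∀ t : ℝ, deriv f t ≠ 0)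
    (v : (Fin 2 → ℝ) → (Fin 2 → ℝ))
    (hv : ∀ x : Fin 2 → ℝ,
      v x = ![-(deriv f (x 0 * x 1)) * x 1, deriv f (x 0 * x 1) * x 0]) :
    (∀ x : Fin 2 → ℝ, v x = 0 ↔ x = 0) ∧
    HasFDerivAt v
      (LinearMap.toContinuousLinearMap
        (Matrix.toLin' (!![0, -(deriv f 0); deriv f 0, 0] : Matrix (Fin 2) (Fin 2) ℝ)))
      0 ∧
    spectrum ℂ
        ((!![0, -(deriv f 0); deriv f 0, 0] : Matrix (Fin 2) (Fin 2) ℝ).map Complex.ofReal)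
      = {Complex.ofReal (deriv f 0) * Complex.I,
         -(Complex.ofReal (deriv f 0) * Complex.I)} := by
  have hv_smul : v = fun x => deriv f (x 0 * x 1) • (quarterTurn ℝ *ᵥ x) :=
    funext fun x => by rw [hv, smul_quarterTurn_mulVec]
  have hφ : ContinuousAt (fun x : Fin 2 → ℝ => deriv f (x 0 * x 1)) 0 :=
    ((hf.continuous_deriv le_rfl).comp (by fun_prop)).continuousAt
  rw [← smul_quarterTurn]
  refine ⟨fun x => ?_, ?_, ?_⟩
  · rw [hv_smul, smul_eq_zero, quarterTurn_mulVec_eq_zero_iff, or_iff_right (hf' _)]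
  · rw [hv_smul, map_smul, map_smul]
    simpa using
      hasFDerivAt_smul_clm_of_continuousAt hφ (toLin' (quarterTurn ℝ)).toContinuousLinearMap
  · rw [map_ofReal_smul_quarterTurn, spectrum_smul_quarterTurn_complex]
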